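/- Let [a,b] ⊂ [t0,∞). Suppose p_{12}(t) ≥ 0 for t ∈ [a,b], and ∫_a^b min[ p_{12}(t) exp{−∫_a^t E(τ) dτ}, −p_{21}(t) exp{∫_a^t E(τ) dτ} ] dt ≥ π. Then the system (2.3) is oscillatory on [a,b], i.e., for every solution (φ(t), ψ(t)) of (2.3) the function φ(t) vanishes at some point of [a,b]. -/

import Mathlib

/-!
Suppose `φ` has no zero on `[a, b]` and put `F t = ∫ τ in a..t, (p11 τ - p22 τ)`. The angle
`θ = arctan (e^F ψ / φ)` is absolutely continuous on `[a, b]`, and the weight `e^F` cancels the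
diagonal terms of the system: almost everywhere
`θ' = e^F (p21 φ² - p12 ψ²) / (φ² + e^{2F} ψ²) ≤ -min (p12 e^{-F}) (-p21 e^F)`.
Integrating, `θ` would drop by at least `π` on `[a, b]`, which is impossible for a function with
values in `(-π/2, π/2)`.
-/

set_option autoImplicit false

open MeasureTheory Set

/-- `(φ, ψ)` is a (locally absolutely continuous) solution of the linear system (2.3)
`φ' = p11 φ + p12 ψ`, `ψ' = p21 φ + p22 ψ` almost everywhere on the set `S`,
with base point `b`. -/
def Sys2SolOn (p11 p12 p21 p22 φ ψ : ℝ → ℝ) (b : ℝ) (S : Set ℝ) : Prop :=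
  ∃ dφ dψ : ℝ → ℝ,
    (∀ t ∈ S, IntervalIntegrable dφ volume b t ∧ IntervalIntegrable dψ volume b t ∧
      φ t = φ b + ∫ τ in b..t, dφ τ ∧ ψ t = ψ b + ∫ τ in b..t, dψ τ) ∧
    (∀ᵐ t ∂volume, t ∈ S →
      dφ t = p11 t * φ t + p12 t * ψ t ∧ dψ t = p21 t * φ t + p22 t * ψ t)

open Filter

namespace AbsolutelyContinuousOnInterval

variable {X : Type*} [PseudoMetricSpace X] {a b : ℝ}

theorem congr {f g : ℝ → X} (hf : AbsolutelyContinuousOnInterval f a b)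
    (hfg : EqOn f g (uIcc a b)) : AbsolutelyContinuousOnInterval g a b := by
  refine Tendsto.congr' ?_ hf
  rw [EventuallyEq, eventually_inf_principal]
  refine Eventually.of_forall fun E hE => Finset.sum_congr rfl fun i hi => ?_
  rw [hfg (hE.1 i hi).1, hfg (hE.1 i hi).2]

theorem _root_.LipschitzOnWith.comp_absolutelyContinuousOnInterval {Y : Type*}
    [PseudoMetricSpace Y] {g : X → Y} {K : NNReal} {s : Set X} (hg : LipschitzOnWith K g s)
    {f : ℝ → X} (hf : AbsolutelyContinuousOnInterval f a b) (hfs : MapsTo f (uIcc a b) s) :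
    AbsolutelyContinuousOnInterval (g ∘ f) a b := by
  unfold AbsolutelyContinuousOnInterval at hf ⊢
  have hKf := hf.const_mul (K : ℝ)
  rw [mul_zero] at hKf
  refine squeeze_zero' (Eventually.of_forall fun _ => Finset.sum_nonneg fun _ _ => dist_nonneg)
    ?_ hKf
  rw [eventually_inf_principal]
  refine Eventually.of_forall fun E hE => ?_
  rw [Finset.mul_sum]
  exact Finset.sum_le_sum fun i hi => hg.dist_le_mul _ (hfs (hE.1 i hi).1) _ (hfs (hE.1 i hi).2)

theorem _root_.ContDiffOn.comp_absolutelyContinuousOnInterval {E F : Type*}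
    [NormedAddCommGroup E] [NormedSpace ℝ E] [NormedAddCommGroup F] [NormedSpace ℝ F]
    {G : E → F} {U : Set E} (hG : ContDiffOn ℝ 1 G U) (hU : IsOpen U) {f : ℝ → E}
    (hf : AbsolutelyContinuousOnInterval f a b) (hfU : MapsTo f (uIcc a b) U) :
    AbsolutelyContinuousOnInterval (G ∘ f) a b := by
  have hK : IsCompact (f '' uIcc a b) := isCompact_uIcc.image_of_continuousOn hf.continuousOn
  have hG_loc : LocallyLipschitzOn (f '' uIcc a b) G := by
    rintro _ ⟨t, ht, rfl⟩
    obtain ⟨K, s, hs, hGs⟩ := (hG.contDiffAt (hU.mem_nhds (hfU ht))).exists_lipschitzOnWith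
    exact ⟨K, s, mem_nhdsWithin_of_mem_nhds hs, hGs⟩
  obtain ⟨K, hGK⟩ := hG_loc.exists_lipschitzOnWith_of_compact hK
  exact hGK.comp_absolutelyContinuousOnInterval hf (mapsTo_image f _)

theorem div {f g : ℝ → ℝ} (hf : AbsolutelyContinuousOnInterval f a b)
    (hg : AbsolutelyContinuousOnInterval g a b) (hg₀ : ∀ t ∈ uIcc a b, g t ≠ 0) :
    AbsolutelyContinuousOnInterval (fun t => f t / g t) a b := by
  have hg_inv : AbsolutelyContinuousOnInterval (fun t => (g t)⁻¹) a b :=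
    (contDiffOn_inv ℝ).comp_absolutelyContinuousOnInterval isOpen_compl_singleton hg hg₀
  simpa only [div_eq_mul_inv] using hf.fun_mul hg_inv

end AbsolutelyContinuousOnInterval

section Primitive

variable {f g : ℝ → ℝ} {c : ℝ}

theorem absolutelyContinuousOnInterval_of_eq_add_integral {a b : ℝ} (hca : c ≤ a) (hab : a ≤ b)
    (hg : IntervalIntegrable g volume c b) (hf : ∀ t ∈ Ici c, f t = f c + ∫ τ in c..t, g τ) :
    AbsolutelyContinuousOnInterval f a b := by
  have hprim := hg.absolutelyContinuousOnInterval_intervalIntegral left_mem_uIcc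
  have hshift : AbsolutelyContinuousOnInterval (fun t => f c + ∫ τ in c..t, g τ) c b :=
    (contDiff_const.add contDiff_id).contDiffOn.comp_absolutelyContinuousOnInterval
      (G := fun x : ℝ => f c + x) isOpen_univ hprim (mapsTo_univ _ _)
  refine (hshift.mono (uIcc_subset_uIcc_right (Icc_subset_uIcc ⟨hca, hab⟩))).congr ?_
  intro t ht
  rw [uIcc_of_le hab] at ht
  exact (hf t (hca.trans ht.1)).symm

theorem ae_hasDerivAt_of_eq_add_integral {b : ℝ} (hcb : c ≤ b)
    (hg : IntervalIntegrable g volume c b) (hf : ∀ t ∈ Ici c, f t = f c + ∫ τ in c..t, g τ) :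
    ∀ᵐ t, t ∈ uIcc c b → HasDerivAt f (g t) t := by
  have hne : ∀ᵐ t : ℝ, t ≠ c := by simp [ae_iff, measure_singleton]
  filter_upwards [hg.ae_hasDerivAt_integral, hne] with t hderiv htc ht
  have hct : c < t := lt_of_le_of_ne (uIcc_of_le hcb ▸ ht).1 (Ne.symm htc)
  refine ((hderiv ht c left_mem_uIcc).const_add (f c)).congr_of_eventuallyEq ?_
  filter_upwards [Ioi_mem_nhds hct] with s hs using hf s (mem_Ici.2 (le_of_lt hs))

end Primitive

namespace Sys2SolOn

variable {p11 p12 p21 p22 φ ψ : ℝ → ℝ} {t0 a b : ℝ}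

theorem absolutelyContinuousOnInterval (h : Sys2SolOn p11 p12 p21 p22 φ ψ t0 (Ici t0))
    (ht0a : t0 ≤ a) (hab : a ≤ b) :
    AbsolutelyContinuousOnInterval φ a b ∧ AbsolutelyContinuousOnInterval ψ a b := by
  obtain ⟨dφ, dψ, hprim, -⟩ := h
  have hb := hprim b (ht0a.trans hab)
  exact ⟨absolutelyContinuousOnInterval_of_eq_add_integral ht0a hab hb.1
      fun t ht => (hprim t ht).2.2.1,
    absolutelyContinuousOnInterval_of_eq_add_integral ht0a hab hb.2.1
      fun t ht => (hprim t ht).2.2.2⟩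

theorem ae_hasDerivAt (h : Sys2SolOn p11 p12 p21 p22 φ ψ t0 (Ici t0))
    (ht0a : t0 ≤ a) (hab : a ≤ b) :
    ∀ᵐ t, t ∈ uIcc a b → HasDerivAt φ (p11 t * φ t + p12 t * ψ t) t ∧
      HasDerivAt ψ (p21 t * φ t + p22 t * ψ t) t := by
  obtain ⟨dφ, dψ, hprim, hode⟩ := h
  have ht0b : t0 ≤ b := ht0a.trans hab
  have hb := hprim b ht0b
  filter_upwards [ae_hasDerivAt_of_eq_add_integral ht0b hb.1 fun t ht => (hprim t ht).2.2.1,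
    ae_hasDerivAt_of_eq_add_integral ht0b hb.2.1 fun t ht => (hprim t ht).2.2.2, hode]
    with t hφ hψ hode_t ht
  have ht' : t ∈ uIcc t0 b := uIcc_subset_uIcc_right (Icc_subset_uIcc ⟨ht0a, hab⟩) ht
  obtain ⟨hdφ, hdψ⟩ := hode_t (uIcc_of_le ht0b ▸ ht').1
  exact ⟨hdφ ▸ hφ ht', hdψ ▸ hψ ht'⟩

end Sys2SolOn

noncomputable def pruferAngle (φ ψ F : ℝ → ℝ) (t : ℝ) : ℝ :=
  Real.arctan (ψ t * Real.exp (F t) / φ t)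

theorem AbsolutelyContinuousOnInterval.pruferAngle {φ ψ F : ℝ → ℝ} {a b : ℝ}
    (hφ : AbsolutelyContinuousOnInterval φ a b) (hψ : AbsolutelyContinuousOnInterval ψ a b)
    (hF : AbsolutelyContinuousOnInterval F a b) (hφ₀ : ∀ t ∈ uIcc a b, φ t ≠ 0) :
    AbsolutelyContinuousOnInterval (pruferAngle φ ψ F) a b := by
  have hexpF : AbsolutelyContinuousOnInterval (Real.exp ∘ F) a b :=
    Real.contDiff_exp.contDiffOn.comp_absolutelyContinuousOnInterval isOpen_univ hF
      (mapsTo_univ _ _)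
  exact Real.contDiff_arctan.contDiffOn.comp_absolutelyContinuousOnInterval isOpen_univ
    ((hψ.fun_mul hexpF).div hφ hφ₀) (mapsTo_univ _ _)

theorem hasDerivAt_pruferAngle {φ ψ F : ℝ → ℝ} {φ' ψ' F' t : ℝ} (hφ : HasDerivAt φ φ' t)
    (hψ : HasDerivAt ψ ψ' t) (hF : HasDerivAt F F' t) (hφt : φ t ≠ 0) :
    HasDerivAt (pruferAngle φ ψ F)
      (Real.exp (F t) * (φ t * ψ' - ψ t * φ' + φ t * ψ t * F') /
        (φ t ^ 2 + (ψ t * Real.exp (F t)) ^ 2)) t := by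
  convert ((hψ.mul hF.exp).div hφ hφt).arctan using 1
  · rfl
  · simp only [Pi.mul_apply, Pi.div_apply]
    field_simp
    ring

theorem exp_mul_div_le_neg_min (x y s p q : ℝ) (hx : x ≠ 0) :
    Real.exp s * (q * x ^ 2 - p * y ^ 2) / (x ^ 2 + (y * Real.exp s) ^ 2) ≤
      -min (p * Real.exp (-s)) (-q * Real.exp s) := by
  set A := Real.exp s
  have hA : Real.exp (-s) * A ^ 2 = A := by
    rw [sq, ← mul_assoc, ← Real.exp_add, neg_add_cancel, Real.exp_zero, one_mul]
  set μ := min (p * Real.exp (-s)) (-q * A)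
  have hx2 : μ * x ^ 2 ≤ -q * A * x ^ 2 :=
    mul_le_mul_of_nonneg_right (min_le_right _ _) (sq_nonneg x)
  have hy2 : μ * (y * A) ^ 2 ≤ p * A * y ^ 2 := by
    calc μ * (y * A) ^ 2 ≤ p * Real.exp (-s) * (y * A) ^ 2 :=
          mul_le_mul_of_nonneg_right (min_le_left _ _) (sq_nonneg _)
      _ = p * (Real.exp (-s) * A ^ 2) * y ^ 2 := by ring
      _ = p * A * y ^ 2 := by rw [hA]
  rw [div_le_iff₀ (by positivity)]
  linarith

section Oscillation

variable {a b : ℝ} {p11 p12 p21 p22 : ℝ → ℝ}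

theorem intervalIntegrable_min_mul_exp {F : ℝ → ℝ}
    (hp12 : IntervalIntegrable p12 volume a b) (hp21 : IntervalIntegrable p21 volume a b)
    (hF : ContinuousOn F (uIcc a b)) :
    IntervalIntegrable
      (fun t => min (p12 t * Real.exp (-F t)) (-(p21 t) * Real.exp (F t))) volume a b := by
  have h₁ : IntervalIntegrable (fun t => p12 t * Real.exp (-F t)) volume a b :=
    hp12.mul_continuousOn (Real.continuous_exp.comp_continuousOn hF.neg)
  have h₂ : IntervalIntegrable (fun t => -(p21 t) * Real.exp (F t)) volume a b :=
    hp21.neg.mul_continuousOn (Real.continuous_exp.comp_continuousOn hF)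
  exact intervalIntegrable_iff.2 (h₁.def'.inf h₂.def')

theorem integral_min_lt_pi_of_forall_ne_zero {φ ψ : ℝ → ℝ} (hab : a ≤ b)
    (hφ : AbsolutelyContinuousOnInterval φ a b) (hψ : AbsolutelyContinuousOnInterval ψ a b)
    (hsys : ∀ᵐ t, t ∈ uIcc a b → HasDerivAt φ (p11 t * φ t + p12 t * ψ t) t ∧
      HasDerivAt ψ (p21 t * φ t + p22 t * ψ t) t)
    (hφ₀ : ∀ t ∈ uIcc a b, φ t ≠ 0)
    (hE : IntervalIntegrable (fun τ => p11 τ - p22 τ) volume a b)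
    (hm : IntervalIntegrable (fun t =>
      min (p12 t * Real.exp (-∫ τ in a..t, (p11 τ - p22 τ)))
        (-(p21 t) * Real.exp (∫ τ in a..t, (p11 τ - p22 τ)))) volume a b) :
    ∫ t in a..b, min (p12 t * Real.exp (-∫ τ in a..t, (p11 τ - p22 τ)))
      (-(p21 t) * Real.exp (∫ τ in a..t, (p11 τ - p22 τ))) < Real.pi := by
  set F : ℝ → ℝ := fun t => ∫ τ in a..t, (p11 τ - p22 τ)
  set m : ℝ → ℝ := fun t => min (p12 t * Real.exp (-F t)) (-(p21 t) * Real.exp (F t))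
  have hθ := hφ.pruferAngle hψ (hE.absolutelyContinuousOnInterval_intervalIntegral left_mem_uIcc)
    hφ₀
  have hθ' : ∀ᵐ t, t ∈ Icc a b → deriv (pruferAngle φ ψ F) t ≤ -m t := by
    filter_upwards [hsys, hE.ae_hasDerivAt_integral] with t hsys_t hF_t ht
    rw [← uIcc_of_le hab] at ht
    rw [(hasDerivAt_pruferAngle (hsys_t ht).1 (hsys_t ht).2 (hF_t ht a left_mem_uIcc)
      (hφ₀ t ht)).deriv]
    convert exp_mul_div_le_neg_min (φ t) (ψ t) (F t) (p12 t) (p21 t) (hφ₀ t ht) using 2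
    ring
  have hdrop : pruferAngle φ ψ F b - pruferAngle φ ψ F a ≤ -∫ t in a..b, m t :=
    calc pruferAngle φ ψ F b - pruferAngle φ ψ F a
        = ∫ t in a..b, deriv (pruferAngle φ ψ F) t := hθ.integral_deriv_eq_sub.symm
      _ ≤ ∫ t in a..b, -m t := intervalIntegral.integral_mono_ae_restrict hab
          hθ.intervalIntegrable_deriv hm.neg ((ae_restrict_iff' measurableSet_Icc).2 hθ')
      _ = -∫ t in a..b, m t := intervalIntegral.integral_neg
  have hθb : -(Real.pi / 2) < pruferAngle φ ψ F b := Real.neg_pi_div_two_lt_arctan _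
  have hθa : pruferAngle φ ψ F a < Real.pi / 2 := Real.arctan_lt_pi_div_two _
  linarith

end Oscillation

theorem stmt2_general
    (t0 a b : ℝ) (hab : a < b) (ht0a : t0 ≤ a)
    (p11 p12 p21 p22 : ℝ → ℝ)
    (hp11 : LocallyIntegrableOn p11 (Ici t0)) (hp12 : LocallyIntegrableOn p12 (Ici t0))
    (hp21 : LocallyIntegrableOn p21 (Ici t0)) (hp22 : LocallyIntegrableOn p22 (Ici t0))
    (hint : Real.pi ≤ ∫ t in a..b,
      min (p12 t * Real.exp (-∫ τ in a..t, (p11 τ - p22 τ)))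
          (-(p21 t) * Real.exp (∫ τ in a..t, (p11 τ - p22 τ)))) :
    ∀ φ ψ : ℝ → ℝ, Sys2SolOn p11 p12 p21 p22 φ ψ t0 (Ici t0) →
      ∃ t ∈ Icc a b, φ t = 0 := by
  intro φ ψ hsol
  by_contra! hφ₀
  rw [← uIcc_of_le hab.le] at hφ₀
  have hsub : uIcc a b ⊆ Ici t0 := fun t ht => ht0a.trans (uIcc_of_le hab.le ▸ ht).1
  have hII : ∀ p : ℝ → ℝ, LocallyIntegrableOn p (Ici t0) → IntervalIntegrable p volume a b :=
    fun p hp => (hp.integrableOn_compact_subset hsub isCompact_uIcc).intervalIntegrable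
  have hE : IntervalIntegrable (fun τ => p11 τ - p22 τ) volume a b :=
    (hII p11 hp11).sub (hII p22 hp22)
  have hm := intervalIntegrable_min_mul_exp (hII p12 hp12) (hII p21 hp21)
    (hE.absolutelyContinuousOnInterval_intervalIntegral left_mem_uIcc).continuousOn
  obtain ⟨hφ, hψ⟩ := hsol.absolutelyContinuousOnInterval ht0a hab.le
  exact hint.not_gt (integral_min_lt_pi_of_forall_ne_zero hab.le hφ hψ
    (hsol.ae_hasDerivAt ht0a hab.le) hφ₀ hE hm)

/-- Theorem 2.3: an interval oscillation criterion for the system (2.3) on `[a,b]`. -/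
theorem stmt2
    (t0 a b : ℝ) (hab : a < b) (ht0a : t0 ≤ a)
    (p11 p12 p21 p22 : ℝ → ℝ)
    (hp11 : LocallyIntegrableOn p11 (Ici t0)) (hp12 : LocallyIntegrableOn p12 (Ici t0))
    (hp21 : LocallyIntegrableOn p21 (Ici t0)) (hp22 : LocallyIntegrableOn p22 (Ici t0))
    (hp12nonneg : ∀ t ∈ Icc a b, 0 ≤ p12 t)
    (hint : Real.pi ≤ ∫ t in a..b,
      min (p12 t * Real.exp (-∫ τ in a..t, (p11 τ - p22 τ)))
          (-(p21 t) * Real.exp (∫ τ in a..t, (p11 τ - p22 τ)))) :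
    ∀ φ ψ : ℝ → ℝ, Sys2SolOn p11 p12 p21 p22 φ ψ t0 (Ici t0) →
      ∃ t ∈ Icc a b, φ t = 0 :=
  stmt2_general t0 a b hab ht0a p11 p12 p21 p22 hp11 hp12 hp21 hp22 hint
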